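/- arXiv:1307.0887 — 2 statements merged into one kernel-verified Lean document; each statement's English description precedes it below -/
import Mathlib

section
/- Let k be a product formula field. For every nonzero homogeneous polynomial P ∈ k[p_0,p_1] of degree d ≥ 1 with factorization P = ∏_{j=1}^d ((p_0,p_1) ∧ q_j^P) over k̄, and for each place v of k, set M^#(P)_v := Σ_{j=1}^d log‖q_j^P‖_v. Then the sum Σ_{v ∈ M_k} N_v · M^#(P)_v is a finite nonnegative real number. -/
/-!
Write `q_j = (a_j, b_j)` and dehomogenize: `p(x) = P(x, 1) ∈ k[x]` factors over `K` as
`∏ (b_j x - a_j)`. At a non-archimedean place `v`, Gauss's lemma (multiplicativity of the Gauss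
norm) gives `∏ max(|a_j|_v, |b_j|_v) = ‖p‖_v`, and `‖p‖_v = 1` as soon as every nonzero
coefficient of `p` is a `v`-unit; this holds for all but finitely many `v`, so the sum is finite.
At every place `|lc(p)|_v = ∏ |lc(b_j x - a_j)|_v ≤ ∏ ‖q_j‖_v`, and by the product formula the
numbers `N_v log |lc(p)|_v` sum to `0`, whence nonnegativity.
-/

theorem AbsoluteValue.max_pos_of_ne_zero {R : Type*} [Semiring R] (w : AbsoluteValue R ℝ)
    {a b : R} (h : (a, b) ≠ 0) : 0 < max (w a) (w b) := by
  rcases not_and_or.1 (Prod.mk_eq_zero.not.1 h) with ha | hb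
  · exact lt_max_of_lt_left (w.pos ha)
  · exact lt_max_of_lt_right (w.pos hb)

section
open Polynomial

theorem Polynomial.gaussNorm_linear {R : Type*} [Ring R] (w : AbsoluteValue R ℝ) (a b : R) :
    (C b * X - C a).gaussNorm w 1 = max (w a) (w b) := by
  have hcoeff0 : (C b * X - C a).coeff 0 = -a := by simp
  have hcoeff1 : (C b * X - C a).coeff 1 = b := by simp
  refine le_antisymm ?_ (max_le ?_ ?_)
  · obtain ⟨i, hi⟩ := (C b * X - C a).exists_eq_gaussNorm w 1
    rw [hi, one_pow, mul_one]
    match i with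
    | 0 => simp
    | 1 => simp
    | n + 2 => simp
  · have := (C b * X - C a).le_gaussNorm w zero_le_one 0
    rwa [hcoeff0, pow_zero, mul_one, w.map_neg] at this
  · have := (C b * X - C a).le_gaussNorm w zero_le_one 1
    rwa [hcoeff1, pow_one, mul_one] at this

theorem Polynomial.gaussNorm_prod_linear {R ι : Type*} [CommRing R] [Nontrivial R]
    {w : AbsoluteValue R ℝ} (hw : IsNonarchimedean w) (s : Finset ι) (a b : ι → R) :
    (∏ j ∈ s, (C (b j) * X - C (a j))).gaussNorm w 1 = ∏ j ∈ s, max (w (a j)) (w (b j)) := by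
  have := gaussNorm_isAbsoluteValue (c := 1) (hna := hw) (hc := one_pos)
  simp only [← gaussNorm_linear]
  exact map_prod (IsAbsoluteValue.abvHom' (gaussNorm w 1)) _ s

theorem Polynomial.abv_leadingCoeff_linear_le {R : Type*} [Ring R] (w : AbsoluteValue R ℝ)
    (a b : R) : w (C b * X - C a).leadingCoeff ≤ max (w a) (w b) := by
  by_cases hb : b = 0
  · simp [hb]
  · rw [sub_eq_add_neg, ← C_neg, leadingCoeff_linear hb]
    exact le_max_right _ _

theorem Polynomial.abv_leadingCoeff_prod_linear_le {R ι : Type*} [CommRing R] [IsDomain R]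
    (w : AbsoluteValue R ℝ) (s : Finset ι) (a b : ι → R) :
    w (∏ j ∈ s, (C (b j) * X - C (a j))).leadingCoeff ≤ ∏ j ∈ s, max (w (a j)) (w (b j)) := by
  rw [leadingCoeff_prod, map_prod]
  exact Finset.prod_le_prod (fun j _ => w.nonneg _) fun j _ => abv_leadingCoeff_linear_le w _ _

theorem Polynomial.gaussNorm_eq_one {R : Type*} [Semiring R] (w : AbsoluteValue R ℝ)
    {p : R[X]} (hp : p ≠ 0) (h : ∀ i ∈ p.support, w (p.coeff i) = 1) : p.gaussNorm w 1 = 1 := by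
  refine le_antisymm ?_ ?_
  · obtain ⟨i, hi⟩ := p.exists_eq_gaussNorm w 1
    rw [hi, one_pow, mul_one]
    by_cases hi : i ∈ p.support
    · exact (h i hi).le
    · simp [notMem_support_iff.mp hi]
  · have := p.le_gaussNorm w zero_le_one p.natDegree
    rwa [h _ (natDegree_mem_support_of_nonzero hp), one_pow, one_mul] at this

theorem Polynomial.C_mul_X_sub_C_ne_zero {R : Type*} [Ring R] {a b : R} (h : (a, b) ≠ 0) :
    C b * X - C a ≠ 0 := by
  contrapose! h
  have h0 : (C b * X - C a).coeff 0 = -a := by simp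
  have h1 : (C b * X - C a).coeff 1 = b := by simp
  rw [h, coeff_zero, zero_eq_neg] at h0
  rw [h, coeff_zero] at h1
  exact Prod.mk_eq_zero.2 ⟨h0, h1.symm⟩

theorem Polynomial.prod_max_eq_one_of_map_eq_prod_linear {k K ι : Type*} [Field k] [CommRing K]
    [Nontrivial K] {w : AbsoluteValue K ℝ} (hw : IsNonarchimedean w) (f : k →+* K) {p : k[X]}
    (hp : p ≠ 0) (hcoeff : ∀ i ∈ p.support, w (f (p.coeff i)) = 1) {s : Finset ι} {a b : ι → K}
    (hfac : p.map f = ∏ j ∈ s, (C (b j) * X - C (a j))) :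
    ∏ j ∈ s, max (w (a j)) (w (b j)) = 1 := by
  rw [← gaussNorm_prod_linear hw, ← hfac]
  refine gaussNorm_eq_one w (map_ne_zero hp) fun i hi => ?_
  rw [support_map_of_injective _ f.injective] at hi
  exact coeff_map f i ▸ hcoeff i hi

theorem Polynomial.log_abv_leadingCoeff_le_sum_log {k K ι : Type*} [Field k] [CommRing K]
    [IsDomain K] (w : AbsoluteValue K ℝ) (f : k →+* K) {p : k[X]} (hp : p ≠ 0) {s : Finset ι}
    {a b : ι → K} (hfac : p.map f = ∏ j ∈ s, (C (b j) * X - C (a j)))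
    (hab : ∀ j ∈ s, (a j, b j) ≠ 0) {n : ι → ℝ} (hn : ∀ j ∈ s, max (w (a j)) (w (b j)) ≤ n j) :
    Real.log (w (f p.leadingCoeff)) ≤ ∑ j ∈ s, Real.log (n j) := by
  have hmax_pos : ∀ j ∈ s, 0 < max (w (a j)) (w (b j)) := fun j hj =>
    w.max_pos_of_ne_zero (hab j hj)
  rw [← Real.log_prod fun j hj => ((hmax_pos j hj).trans_le (hn j hj)).ne']
  refine Real.log_le_log (w.pos (by simpa using hp)) ?_
  rw [← leadingCoeff_map, hfac]
  exact (abv_leadingCoeff_prod_linear_le w s a b).trans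
    (Finset.prod_le_prod (fun j hj => (hmax_pos j hj).le) hn)

end

theorem max_le_sqrt_sq_add_sq {x y : ℝ} (hx : 0 ≤ x) (hy : 0 ≤ y) :
    max x y ≤ √(x ^ 2 + y ^ 2) :=
  max_le ((Real.le_sqrt hx (by positivity)).2 (le_add_of_nonneg_right (sq_nonneg y)))
    ((Real.le_sqrt hy (by positivity)).2 (le_add_of_nonneg_left (sq_nonneg x)))

open MvPolynomial Classical

/-- A product formula field: a field equipped with places (represented by non-trivial
absolute values, with multiplicities `N v`) satisfying the product formula. -/
structure PlaceData (k : Type*) [Field k] where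
  ι : Type
  N : ι → ℕ
  Npos : ∀ v, 0 < N v
  abv : ι → AbsoluteValue k ℝ
  nontrivial' : ∀ v, ∃ x : k, x ≠ 0 ∧ abv v x ≠ 1
  finiteSupport : ∀ x : k, x ≠ 0 → {v | abv v x ≠ 1}.Finite
  productFormula : ∀ x : k, x ≠ 0 → (∏ᶠ v, abv v x ^ N v) = 1

theorem PlaceData.hasSum_mul_log_abv {k : Type*} [Field k] (pd : PlaceData k) {x : k}
    (hx : x ≠ 0) : HasSum (fun v => (pd.N v : ℝ) * Real.log (pd.abv v x)) 0 := by
  set S := (pd.finiteSupport x hx).toFinset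
  have hS : ∀ v ∉ S, pd.abv v x = 1 := by simp [S]
  have hprod : ∏ᶠ v, pd.abv v x ^ pd.N v = ∏ v ∈ S, pd.abv v x ^ pd.N v :=
    finprod_eq_prod_of_mulSupport_subset _ fun v hv => by
      by_contra h
      exact hv (by simp [hS v h])
  have hlog : ∑ v ∈ S, (pd.N v : ℝ) * Real.log (pd.abv v x) = 0 := by
    rw [← Real.log_one, ← pd.productFormula x hx, hprod,
      Real.log_prod fun v _ => pow_ne_zero _ ((pd.abv v).ne_zero hx)]
    simp only [Real.log_pow]
  exact hlog ▸ hasSum_sum_of_ne_finset_zero fun v hv => by simp [hS v hv]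

theorem PlaceData.finite_setOf_exists_abv_coeff_ne_one {k : Type*} [Field k] (pd : PlaceData k)
    (p : Polynomial k) : {v | ∃ i ∈ p.support, pd.abv v (p.coeff i) ≠ 1}.Finite := by
  have h : {v | ∃ i ∈ p.support, pd.abv v (p.coeff i) ≠ 1} =
      ⋃ i ∈ p.support, {v | pd.abv v (p.coeff i) ≠ 1} := by
    ext
    simp
  rw [h]
  exact p.support.finite_toSet.biUnion fun i hi =>
    pd.finiteSupport _ (Polynomial.mem_support_iff.1 hi)

noncomputable def MvPolynomial.dehomogenize {R : Type*} [CommSemiring R] :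
    MvPolynomial (Fin 2) R →+* Polynomial R :=
  eval₂Hom Polynomial.C ![Polynomial.X, 1]

theorem MvPolynomial.dehomogenize_map {R S : Type*} [CommSemiring R] [CommSemiring S]
    (f : R →+* S) (P : MvPolynomial (Fin 2) R) :
    dehomogenize (P.map f) = (dehomogenize P).map f := by
  suffices h : dehomogenize.comp (map f) = (Polynomial.mapRingHom f).comp dehomogenize from
    RingHom.congr_fun h P
  refine MvPolynomial.ringHom_ext (fun r => by simp [dehomogenize]) fun i => ?_
  fin_cases i <;> simp [dehomogenize]

theorem MvPolynomial.dehomogenize_linear {R : Type*} [CommRing R] (a b : R) :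
    dehomogenize (X 0 * C b - X 1 * C a : MvPolynomial (Fin 2) R) =
      Polynomial.C b * Polynomial.X - Polynomial.C a := by
  simp [dehomogenize]

theorem stmt5_general (k : Type*) [Field k] (pd : PlaceData k)
    (K : Type*) [Field K] [Algebra k K]
    (abvK : pd.ι → AbsoluteValue K ℝ)
    (hext : ∀ v (x : k), abvK v (algebraMap k K x) = pd.abv v x)
    (nonarch : pd.ι → Prop)
    (harchfin : {v | ¬ nonarch v}.Finite)
    (hna : ∀ v, nonarch v → ∀ x y : K, abvK v (x + y) ≤ max (abvK v x) (abvK v y))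
    (nrm : pd.ι → K × K → ℝ)
    (hnrm : ∀ v p, nrm v p =
      if nonarch v then max (abvK v p.1) (abvK v p.2)
      else Real.sqrt (abvK v p.1 ^ 2 + abvK v p.2 ^ 2))
    (d : ℕ)
    (P : MvPolynomial (Fin 2) k)
    (q : Fin d → K × K) (hq : ∀ j, q j ≠ 0)
    (hfact : P.map (algebraMap k K) =
      ∏ j : Fin d, (X 0 * C (q j).2 - X 1 * C (q j).1)) :
    Summable (fun v => (pd.N v : ℝ) * ∑ j : Fin d, Real.log (nrm v (q j))) ∧
      0 ≤ ∑' v, (pd.N v : ℝ) * ∑ j : Fin d, Real.log (nrm v (q j)) := by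
  set p := dehomogenize P
  have hp : p.map (algebraMap k K) =
      ∏ j, (Polynomial.C (q j).2 * Polynomial.X - Polynomial.C (q j).1) := by
    simp only [p, ← dehomogenize_map, hfact, map_prod, dehomogenize_linear]
  have hp0 : p ≠ 0 := fun h => by
    simp only [h, Polynomial.map_zero] at hp
    exact Finset.prod_ne_zero_iff.2 (fun j _ => Polynomial.C_mul_X_sub_C_ne_zero (hq j)) hp.symm
  have hmax_le : ∀ v j, max (abvK v (q j).1) (abvK v (q j).2) ≤ nrm v (q j) := by
    intro v j
    rw [hnrm]
    split_ifs
    · exact le_rfl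
    · exact max_le_sqrt_sq_add_sq ((abvK v).nonneg _) ((abvK v).nonneg _)
  have hlower : ∀ v, (pd.N v : ℝ) * Real.log (pd.abv v p.leadingCoeff) ≤
      (pd.N v : ℝ) * ∑ j, Real.log (nrm v (q j)) := fun v =>
    mul_le_mul_of_nonneg_left (hext v _ ▸ Polynomial.log_abv_leadingCoeff_le_sum_log (abvK v) _ hp0
      hp (fun j _ => hq j) fun j _ => hmax_le v j) (Nat.cast_nonneg _)
  have hS := harchfin.union (pd.finite_setOf_exists_abv_coeff_ne_one p)
  have hvanish : ∀ v ∉ hS.toFinset, (pd.N v : ℝ) * ∑ j, Real.log (nrm v (q j)) = 0 := by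
    intro v hv
    simp only [Set.Finite.mem_toFinset, Set.mem_union, Set.mem_ofPred_eq, not_or, not_not,
      not_exists, not_and] at hv
    obtain ⟨hv_na, hv_unit⟩ := hv
    simp only [hnrm, if_pos hv_na]
    rw [← Real.log_prod fun j _ => ((abvK v).max_pos_of_ne_zero (hq j)).ne',
      Polynomial.prod_max_eq_one_of_map_eq_prod_linear (hna v hv_na) _ hp0
        (fun i hi => by rw [hext]; exact hv_unit i hi) hp, Real.log_one, mul_zero]
  have hsum : Summable fun v => (pd.N v : ℝ) * ∑ j, Real.log (nrm v (q j)) :=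
    summable_of_ne_finset_zero hvanish
  exact ⟨hsum, hasSum_le hlower (pd.hasSum_mul_log_abv (Polynomial.leadingCoeff_ne_zero.2 hp0))
    hsum.hasSum⟩

/-- Let `k` be a product formula field, `P ∈ k[p₀,p₁]` homogeneous of
degree `d ≥ 1`, factored over the algebraic closure `K` as `P = ∏_j ((p₀,p₁) ∧ q_j)`.
For each place `v` set `M^#(P)_v := Σ_j log‖q_j‖_v`, where `‖·‖_v` is the max norm at
non-archimedean places and the Euclidean norm at the (finitely many) archimedean places,
computed with a fixed extension of `|·|_v` to `K`. Then `Σ_v N_v · M^#(P)_v` is a finite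
nonnegative real number. -/
theorem stmt5 (k : Type*) [Field k] (pd : PlaceData k)
    (K : Type*) [Field K] [Algebra k K] [IsAlgClosure k K]
    (abvK : pd.ι → AbsoluteValue K ℝ)
    (hext : ∀ v (x : k), abvK v (algebraMap k K x) = pd.abv v x)
    (nonarch : pd.ι → Prop)
    (harchfin : {v | ¬ nonarch v}.Finite)
    (hna : ∀ v, nonarch v → ∀ x y : K, abvK v (x + y) ≤ max (abvK v x) (abvK v y))
    (nrm : pd.ι → K × K → ℝ)
    (hnrm : ∀ v p, nrm v p =
      if nonarch v then max (abvK v p.1) (abvK v p.2)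
      else Real.sqrt (abvK v p.1 ^ 2 + abvK v p.2 ^ 2))
    (d : ℕ) (hd : 1 ≤ d)
    (P : MvPolynomial (Fin 2) k) (hP : P ≠ 0) (hhom : P.IsHomogeneous d)
    (q : Fin d → K × K) (hq : ∀ j, q j ≠ 0)
    (hfact : P.map (algebraMap k K) =
      ∏ j : Fin d, (X 0 * C (q j).2 - X 1 * C (q j).1)) :
    Summable (fun v => (pd.N v : ℝ) * ∑ j : Fin d, Real.log (nrm v (q j))) ∧
      0 ≤ ∑' v, (pd.N v : ℝ) * ∑ j : Fin d, Real.log (nrm v (q j)) :=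
  stmt5_general k pd K abvK hext nonarch harchfin hna nrm hnrm d P q hq hfact
end

section
/- Let k be a field and Z a k-algebraic zeros divisor on ℙ¹(k̄) represented by a homogeneous P ∈ k[p_0,p_1] of degree d ≥ 1. Let (q_j^P)_{j=1}^d be a factorization sequence normalized with respect to a distinguished zero w_0 ∈ ℙ¹(k̄) of P (i.e., (q_j^P)_0 = 1 if z_j ∉ {w_0, ∞}, and (q_j^P)_1 = 1 if w_0 ≠ z_j = ∞). Then ∏_{j=1}^d ∏_{i: z_i ≠ z_j} (q_i^P ∧ q_j^P) = (−1)^{deg_∞ P · (d − deg_∞ P)} · L(P(1,·))^{2(d − deg_{w_0} P)} · D*(Z|k̄). -/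
open MvPolynomial Classical Finset

/-- Let `Z` be a `k`-algebraic zeros divisor on `ℙ¹(K)` (`K` an algebraic
closure of `k`) represented by a homogeneous `P ∈ k[p₀,p₁]` of degree `d ≥ 1`, with
factorization sequence `(q_j)` normalized with respect to a distinguished zero `w₀` of `P`
(i.e. `(q_j)_0 = 1` if `z_j ∉ {w₀,∞}`, and `(q_j)_1 = 1` if `w₀ ≠ z_j = ∞`, where
`z_j = π(q_j) ∈ ℙ¹(K)` is coded as an element of `Option K`, `none = ∞`).  Then
`∏_j ∏_{i : z_i ≠ z_j} (q_i ∧ q_j)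
  = (−1)^{deg_∞P·(d−deg_∞P)} · L(P(1,·))^{2(d−deg_{w₀}P)} · D*(Z|K)`. -/
theorem stmt7 (k : Type*) [Field k]
    (K : Type*) [Field K] [Algebra k K] [IsAlgClosure k K]
    (d : ℕ) (hd : 1 ≤ d)
    (P : MvPolynomial (Fin 2) k) (hP : P ≠ 0) (hhom : P.IsHomogeneous d)
    (q : Fin d → K × K) (hq : ∀ j, q j ≠ 0)
    (hfact : P.map (algebraMap k K) =
      ∏ j : Fin d, (X 0 * C (q j).2 - X 1 * C (q j).1))
    -- the projective points `z_j = π(q_j)`, coded in `Option K` (`none = ∞`)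
    (zpt : Fin d → Option K)
    (hzpt : ∀ j, zpt j = if (q j).1 = 0 then none else some ((q j).2 / (q j).1))
    -- the distinguished zero `w₀` of `P` and the normalization of the lifts
    (w₀ : Option K) (hw₀ : w₀ ∈ Set.range zpt)
    (hnorm₀ : ∀ j, zpt j ≠ w₀ → zpt j ≠ none → (q j).1 = 1)
    (hnorm₁ : ∀ j, w₀ ≠ none → zpt j = none → (q j).2 = 1) :
    (∏ j : Fin d, ∏ i ∈ Finset.univ.filter fun i => zpt i ≠ zpt j,
        ((q i).1 * (q j).2 - (q i).2 * (q j).1))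
      = (-1) ^ ((Finset.univ.filter fun j => zpt j = none).card *
            (d - (Finset.univ.filter fun j => zpt j = none).card)) *
        (algebraMap k K
            (MvPolynomial.eval₂ Polynomial.C
              (fun i => if i = 0 then 1 else Polynomial.X) P).leadingCoeff) ^
          (2 * (d - (Finset.univ.filter fun j => zpt j = w₀).card)) *
        ∏ w ∈ ((Finset.univ.image zpt).erase none),
          ∏ w' ∈ (((Finset.univ.image zpt).erase none).erase w),
            (w.getD 0 - w'.getD 0) ^
              ((Finset.univ.filter fun j => zpt j = w).card *
               (Finset.univ.filter fun j => zpt j = w').card) := by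
  classical
  -- abbreviations
  set e : ℕ := (Finset.univ.filter fun j => zpt j = none).card with he
  set m : ℕ := (Finset.univ.filter fun j => zpt j = w₀).card with hm
  set T : Finset (Option K) := (Finset.univ.image zpt).erase none with hTdef
  set lam : Fin d → K := fun j => if (q j).1 = 0 then (q j).2 else (q j).1 with hlamdef
  set eps : Fin d → Fin d → K := fun i j =>
    if zpt i = none then -1 else if zpt j = none then (1:K)
    else ((zpt j).getD 0 - (zpt i).getD 0) with hepsdef
  have hzero : ∀ j, (zpt j = none) ↔ (q j).1 = 0 := by
    intro j; rw [hzpt j]; by_cases h : (q j).1 = 0 <;> simp [h]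
  have hval : ∀ j, (q j).1 ≠ 0 → zpt j = some ((q j).2 / (q j).1) := by
    intro j h; rw [hzpt j, if_neg h]
  have hlam1 : ∀ j, zpt j ≠ w₀ → lam j = 1 := by
    intro j hj
    by_cases h : (q j).1 = 0
    · have hnone : zpt j = none := (hzero j).2 h
      have hwn : w₀ ≠ none := fun hw => hj (hnone.trans hw.symm)
      simp [hlamdef, h, hnorm₁ j hwn hnone]
    · simp [hlamdef, h, hnorm₀ j hj (fun hn => h ((hzero j).1 hn))]
  -- cardinality of complements
  have cardA : ∀ v : Option K, (Finset.univ.filter fun i : Fin d => zpt i ≠ v).card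
      = d - (Finset.univ.filter fun i : Fin d => zpt i = v).card := by
    intro v
    have h1 := Finset.card_filter_add_card_filter_not
      (s := (Finset.univ : Finset (Fin d))) (p := fun i => zpt i = v)
    have h2 : (Finset.univ : Finset (Fin d)).card = d := by simp
    have h3 : (Finset.univ.filter fun i : Fin d => ¬ (zpt i = v)) =
        (Finset.univ.filter fun i : Fin d => zpt i ≠ v) := rfl
    rw [← h3]; omega
  -- pointwise factorization of the wedge
  have hwedge : ∀ i j, zpt i ≠ zpt j →
      (q i).1 * (q j).2 - (q i).2 * (q j).1 = lam i * lam j * eps i j := by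
    intro i j hij
    by_cases hi : (q i).1 = 0 <;> by_cases hj : (q j).1 = 0
    · exact absurd (((hzero i).2 hi).trans ((hzero j).2 hj).symm) hij
    · have h1 : zpt i = none := (hzero i).2 hi
      have h2 : ¬ zpt j = none := fun h => hj ((hzero j).1 h)
      simp only [hlamdef, hepsdef, hi, hj, if_pos, if_neg, h1, h2, if_true, if_false]
      ring
    · have h1 : ¬ zpt i = none := fun h => hi ((hzero i).1 h)
      have h2 : zpt j = none := (hzero j).2 hj
      simp only [hlamdef, hepsdef, hi, hj, h1, h2, if_true, if_false, hj]
      ring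
    · have h1 : ¬ zpt i = none := fun h => hi ((hzero i).1 h)
      have h2 : ¬ zpt j = none := fun h => hj ((hzero j).1 h)
      simp only [hlamdef, hepsdef, hi, hj, h1, h2, if_false]
      rw [hval i hi, hval j hj]
      simp only [Option.getD_some]
      field_simp
  -- Step 0 : split the LHS into three products
  have step0 : (∏ j : Fin d, ∏ i ∈ Finset.univ.filter fun i => zpt i ≠ zpt j,
        ((q i).1 * (q j).2 - (q i).2 * (q j).1))
      = (∏ j : Fin d, ∏ i ∈ Finset.univ.filter fun i => zpt i ≠ zpt j, lam i) *
        (∏ j : Fin d, ∏ i ∈ Finset.univ.filter fun i => zpt i ≠ zpt j, lam j) *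
        (∏ j : Fin d, ∏ i ∈ Finset.univ.filter fun i => zpt i ≠ zpt j, eps i j) := by
    rw [← Finset.prod_mul_distrib, ← Finset.prod_mul_distrib]
    refine Finset.prod_congr rfl fun j _ => ?_
    rw [← Finset.prod_mul_distrib, ← Finset.prod_mul_distrib]
    refine Finset.prod_congr rfl fun i hi => ?_
    exact hwedge i j (by simpa using (Finset.mem_filter.mp hi).2)
  -- Step 1 : the `lam j` product
  have step1 : (∏ j : Fin d, ∏ i ∈ Finset.univ.filter fun i => zpt i ≠ zpt j, lam j)
      = (∏ j : Fin d, lam j) ^ (d - m) := by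
    rw [← Finset.prod_pow]
    refine Finset.prod_congr rfl fun j _ => ?_
    rw [Finset.prod_const]
    by_cases hj : zpt j = w₀
    · rw [cardA (zpt j), hj, ← hm]
    · rw [hlam1 j hj, one_pow, one_pow]
  -- Step 2 : the `lam i` product
  have step2 : (∏ j : Fin d, ∏ i ∈ Finset.univ.filter fun i => zpt i ≠ zpt j, lam i)
      = (∏ j : Fin d, lam j) ^ (d - m) := by
    have hsw : (∏ j : Fin d, ∏ i ∈ Finset.univ.filter fun i => zpt i ≠ zpt j, lam i)
        = ∏ i : Fin d, ∏ j ∈ Finset.univ.filter (fun j => zpt i ≠ zpt j), lam i := by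
      refine Finset.prod_comm' ?_
      intro j i; simp [Finset.mem_filter]
    rw [hsw, ← Finset.prod_pow]
    refine Finset.prod_congr rfl fun i _ => ?_
    rw [Finset.prod_const]
    by_cases hi : zpt i = w₀
    · have hcong : (Finset.univ.filter fun j => zpt i ≠ zpt j)
          = (Finset.univ.filter fun j : Fin d => zpt j ≠ zpt i) := by
        apply Finset.filter_congr; intro j _; exact ne_comm
      rw [hcong, cardA (zpt i), hi, ← hm]
    · rw [hlam1 i hi, one_pow, one_pow]
  -- Step 3 : the epsilon product
  have step3 : (∏ j : Fin d, ∏ i ∈ Finset.univ.filter fun i => zpt i ≠ zpt j, eps i j)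
      = (-1) ^ (e * (d - e)) *
        ∏ w ∈ T, ∏ w' ∈ T.erase w,
            (w.getD 0 - w'.getD 0) ^
              ((Finset.univ.filter fun j => zpt j = w).card *
               (Finset.univ.filter fun j => zpt j = w').card) := by
    have hF : (Finset.univ.filter fun j : Fin d => ¬ zpt j = none).card = d - e := by
      rw [show (Finset.univ.filter fun j : Fin d => ¬ zpt j = none)
        = (Finset.univ.filter fun j : Fin d => zpt j ≠ none) from rfl, cardA none, ← he]
    set Hf : Option K → K := fun w =>
      ∏ i ∈ Finset.univ.filter (fun i => zpt i ≠ w ∧ ¬ zpt i = none),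
        (w.getD 0 - (zpt i).getD 0) with hHf
    -- inner product for an infinite point is 1
    have inner1 : ∀ j : Fin d, zpt j = none →
        (∏ i ∈ Finset.univ.filter fun i => zpt i ≠ zpt j, eps i j) = 1 := by
      intro j hj
      refine Finset.prod_eq_one fun i hi => ?_
      have hin : ¬ zpt i = none := by
        have h := (Finset.mem_filter.mp hi).2; rw [hj] at h; exact h
      simp [hepsdef, hin, hj]
    -- inner product for a finite point
    have inner2 : ∀ j : Fin d, ¬ zpt j = none →
        (∏ i ∈ Finset.univ.filter fun i => zpt i ≠ zpt j, eps i j)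
        = (-1) ^ e * Hf (zpt j) := by
      intro j hj
      rw [← Finset.prod_filter_mul_prod_filter_not
        (Finset.univ.filter fun i => zpt i ≠ zpt j) (fun i => zpt i = none)]
      congr 1
      · have hset : ((Finset.univ.filter fun i => zpt i ≠ zpt j).filter
            fun i => zpt i = none) = Finset.univ.filter fun i : Fin d => zpt i = none := by
          ext i
          simp only [Finset.mem_filter, Finset.mem_univ, true_and]
          exact ⟨fun h => h.2, fun h => ⟨by rw [h]; exact fun hh => hj hh.symm, h⟩⟩
        rw [hset]
        calc (∏ i ∈ Finset.univ.filter fun i : Fin d => zpt i = none, eps i j)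
            = ∏ i ∈ Finset.univ.filter fun i : Fin d => zpt i = none, (-1 : K) := by
              refine Finset.prod_congr rfl fun i hi => ?_
              have hin : zpt i = none := (Finset.mem_filter.mp hi).2
              simp [hepsdef, hin]
          _ = (-1) ^ e := by rw [Finset.prod_const, ← he]
      · rw [Finset.filter_filter]
        refine Finset.prod_congr rfl fun i hi => ?_
        have h := (Finset.mem_filter.mp hi).2
        simp [hepsdef, h.2, hj]
    -- split the outer product
    rw [← Finset.prod_filter_mul_prod_filter_not Finset.univ (fun j : Fin d => zpt j = none)]
    rw [Finset.prod_congr rfl (fun j hj => inner1 j (Finset.mem_filter.mp hj).2),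
      Finset.prod_const_one, one_mul]
    rw [Finset.prod_congr rfl (fun j hj => inner2 j (Finset.mem_filter.mp hj).2)]
    rw [Finset.prod_mul_distrib, Finset.prod_const, hF, ← pow_mul]
    congr 1
    -- now fiber the remaining product over the values
    have hmaps : ∀ j ∈ Finset.univ.filter (fun j : Fin d => ¬ zpt j = none), zpt j ∈ T := by
      intro j hj
      refine Finset.mem_erase.mpr ⟨(Finset.mem_filter.mp hj).2, ?_⟩
      exact Finset.mem_image.mpr ⟨j, Finset.mem_univ j, rfl⟩
    rw [← Finset.prod_fiberwise_of_maps_to hmaps (fun j => Hf (zpt j))]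
    refine Finset.prod_congr rfl fun w hw => ?_
    have hwn : w ≠ none := (Finset.mem_erase.mp hw).1
    have hfil : ((Finset.univ.filter fun j : Fin d => ¬ zpt j = none).filter
        fun j => zpt j = w) = Finset.univ.filter fun j : Fin d => zpt j = w := by
      rw [Finset.filter_filter]
      apply Finset.filter_congr
      intro j _
      exact ⟨fun h => h.2, fun h => ⟨fun hn => hwn (h ▸ hn), h⟩⟩
    rw [hfil]
    have hconst : (∏ j ∈ Finset.univ.filter fun j : Fin d => zpt j = w, Hf (zpt j))
        = Hf w ^ (Finset.univ.filter fun j : Fin d => zpt j = w).card := by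
      rw [Finset.prod_congr rfl (fun j hj => by rw [(Finset.mem_filter.mp hj).2]),
        Finset.prod_const]
    rw [hconst]
    -- compute Hf w by fibering again
    have hmaps2 : ∀ i ∈ Finset.univ.filter (fun i : Fin d => zpt i ≠ w ∧ ¬ zpt i = none),
        zpt i ∈ T.erase w := by
      intro i hi
      have h := (Finset.mem_filter.mp hi).2
      exact Finset.mem_erase.mpr ⟨h.1, Finset.mem_erase.mpr
        ⟨h.2, Finset.mem_image.mpr ⟨i, Finset.mem_univ i, rfl⟩⟩⟩
    have hHfw : Hf w = ∏ w' ∈ T.erase w,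
        (w.getD 0 - w'.getD 0) ^ (Finset.univ.filter fun j : Fin d => zpt j = w').card := by
      rw [hHf]
      beta_reduce
      rw [← Finset.prod_fiberwise_of_maps_to hmaps2 (fun i => w.getD 0 - (zpt i).getD 0)]
      refine Finset.prod_congr rfl fun w' hw' => ?_
      have hw'1 : w' ≠ w := (Finset.mem_erase.mp hw').1
      have hw'2 : w' ≠ none := (Finset.mem_erase.mp (Finset.mem_erase.mp hw').2).1
      have hfil2 : ((Finset.univ.filter fun i : Fin d => zpt i ≠ w ∧ ¬ zpt i = none).filter
          fun i => zpt i = w') = Finset.univ.filter fun i : Fin d => zpt i = w' := by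
        rw [Finset.filter_filter]
        apply Finset.filter_congr
        intro i _
        exact ⟨fun h => h.2, fun h => ⟨⟨fun hh => hw'1 (h ▸ hh : w' = w), fun hh => hw'2 (h ▸ hh)⟩, h⟩⟩
      rw [hfil2]
      rw [Finset.prod_congr rfl (fun i hi => by rw [(Finset.mem_filter.mp hi).2]),
        Finset.prod_const]
    rw [hHfw, ← Finset.prod_pow]
    refine Finset.prod_congr rfl fun w' _ => ?_
    rw [← pow_mul, Nat.mul_comm]
  -- Step 4 : the leading coefficient
  have step4 : ((algebraMap k K)
        (MvPolynomial.eval₂ Polynomial.C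
          (fun i => if i = 0 then 1 else Polynomial.X) P).leadingCoeff) ^ (2 * (d - m))
      = (∏ j : Fin d, lam j) ^ (2 * (d - m)) := by
    have hL : (algebraMap k K)
        (MvPolynomial.eval₂ Polynomial.C
          (fun i => if i = 0 then 1 else Polynomial.X) P).leadingCoeff
        = ∏ j : Fin d, (if (q j).1 = 0 then (q j).2 else -(q j).1) := by
      rw [← Polynomial.leadingCoeff_map (algebraMap k K)]
      have h1 : Polynomial.map (algebraMap k K)
          (MvPolynomial.eval₂ Polynomial.C
            (fun i : Fin 2 => if i = 0 then 1 else Polynomial.X) P)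
          = MvPolynomial.eval₂ Polynomial.C
            (fun i : Fin 2 => if i = 0 then 1 else Polynomial.X)
            (P.map (algebraMap k K)) := by
        have e1 := MvPolynomial.eval₂_comp_left
          (Polynomial.mapRingHom (algebraMap k K)) Polynomial.C
          (fun i : Fin 2 => if i = 0 then 1 else Polynomial.X) P
        rw [Polynomial.coe_mapRingHom] at e1
        rw [e1, MvPolynomial.eval₂_map]
        congr 1
        · ext a
          simp
        · funext i
          by_cases h : i = 0 <;> simp [h]
      rw [h1, hfact]
      have h2 : MvPolynomial.eval₂ Polynomial.C
          (fun i : Fin 2 => if i = 0 then 1 else Polynomial.X)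
          (∏ j : Fin d, (X 0 * C (q j).2 - X 1 * C (q j).1))
          = ∏ j : Fin d, (Polynomial.C (q j).2 - Polynomial.X * Polynomial.C (q j).1) := by
        rw [MvPolynomial.eval₂_prod]
        refine Finset.prod_congr rfl fun j _ => ?_
        rw [MvPolynomial.eval₂_sub, MvPolynomial.eval₂_mul, MvPolynomial.eval₂_mul,
          MvPolynomial.eval₂_X, MvPolynomial.eval₂_X, MvPolynomial.eval₂_C,
          MvPolynomial.eval₂_C]
        norm_num
      rw [h2, Polynomial.leadingCoeff_prod]
      refine Finset.prod_congr rfl fun j _ => ?_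
      by_cases h : (q j).1 = 0
      · simp [h, Polynomial.leadingCoeff_C]
      · have hrw : Polynomial.C (q j).2 - Polynomial.X * Polynomial.C (q j).1
            = Polynomial.C (-(q j).1) * Polynomial.X + Polynomial.C (q j).2 := by
          rw [map_neg]; ring
        rw [hrw, Polynomial.leadingCoeff_linear (neg_ne_zero.mpr h), if_neg h]
    have hsplit : (∏ j : Fin d, (if (q j).1 = 0 then (q j).2 else -(q j).1))
        = (-1 : K) ^ (d - e) * ∏ j : Fin d, lam j := by
      have h1 : (∏ j : Fin d, (if (q j).1 = 0 then (q j).2 else -(q j).1))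
          = ∏ j : Fin d, ((if (q j).1 = 0 then (1:K) else -1) * lam j) := by
        refine Finset.prod_congr rfl fun j _ => ?_
        by_cases h : (q j).1 = 0 <;> simp [hlamdef, h]
      rw [h1, Finset.prod_mul_distrib]
      congr 1
      rw [Finset.prod_ite, Finset.prod_const_one, one_mul, Finset.prod_const]
      congr 1
      have hcong : (Finset.univ.filter fun j : Fin d => ¬ (q j).1 = 0)
          = Finset.univ.filter fun j : Fin d => zpt j ≠ none := by
        apply Finset.filter_congr
        intro j _
        exact not_congr (hzero j).symm
      rw [hcong, cardA none, ← he]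
    rw [hL, hsplit, mul_pow, ← pow_mul]
    have heven : Even ((d - e) * (2 * (d - m))) := ⟨(d - e) * (d - m), by ring⟩
    rw [heven.neg_one_pow, one_mul]
  rw [step0, step1, step2, step3, step4]
  rw [← pow_add]
  have : d - m + (d - m) = 2 * (d - m) := by ring
  rw [this]
  ring
end
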